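/- Let μ = i₁i₂⋯i_r and ν = j₁j₂⋯j_s with r, s ≥ 1, where i₁ ≥ i₂ ≥ ⋯ ≥ i_r and j₁ ≥ j₂ ≥ ⋯ ≥ j_s are Lyndon words. Suppose that each of i₁ and j₁ contains at most two occurrences of its first letter. Then the lexicographically greatest shuffle w of μ and ν is either of the form w = i₁ ⬝ w′ for some shuffle w′ of i₂⋯i_r and ν, or of the form w = j₁ ⬝ w″ for some shuffle w″ of μ and j₂⋯j_s. -/

import Mathlib

/-- `IsShuffle μ ν w` means that `w` is an interleaving (shuffle) of the words `μ` and `ν`. -/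
inductive IsShuffle {α : Type*} : List α → List α → List α → Prop
  | nil : IsShuffle [] [] []
  | left {a : α} {μ ν w : List α} : IsShuffle μ ν w → IsShuffle (a :: μ) ν (a :: w)
  | right {a : α} {μ ν w : List α} : IsShuffle μ ν w → IsShuffle μ (a :: ν) (a :: w)

/-- A nonempty word `u` is a Lyndon word if it is lexicographically strictly smaller than
every proper nonempty suffix of itself. -/
def IsLyndon {α : Type*} [LinearOrder α] (u : List α) : Prop :=
  u ≠ [] ∧ ∀ v : List α, v ≠ [] → v ≠ u → v <:+ u → u < v


/-!
By symmetry we may assume `ν ≤ μ = i₁ ++ m`. For every nonempty suffix `q` of the Lyndon word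
`i₁` we have `i₁ ≤ q` with `i₁` not a prefix of `q`, hence `ν ≤ i₁ ++ m ≤ q ++ m`: while `i₁` is
being read, the rest of `μ` is never smaller than `ν`. In that situation taking the next letter
from `μ` never produces a smaller shuffle, so every shuffle of `μ` and `ν` is dominated by one
that begins with `i₁` read off `μ`, and a greatest shuffle must itself have this form.
-/

namespace List

variable {α : Type*} [LinearOrder α]

theorem eq_nil_of_le_nil {x : List α} (h : x ≤ []) : x = [] :=
  (le_iff_lt_or_eq.mp h).resolve_left (not_lt_nil x)

-- Core's `List.cons_le_cons_iff` is about core's `≤` on lists, which is not the `≤` of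
-- Mathlib's `LinearOrder (List α)`.
theorem cons_le_cons_iff' {a b : α} {x y : List α} :
    a :: x ≤ b :: y ↔ a < b ∨ a = b ∧ x ≤ y := by
  simp only [le_iff_lt_or_eq, cons_lt_cons_iff, cons.injEq]
  tauto

theorem append_lt_append_of_not_prefix {x y : List α} (hxy : x < y) (hpre : ¬ x <+: y)
    (s t : List α) : x ++ s < y ++ t := by
  induction hxy with
  | nil => exact absurd nil_prefix hpre
  | cons _ ih => exact Lex.cons (ih fun hp => hpre (cons_prefix_cons.mpr ⟨rfl, hp⟩))
  | rel h => exact Lex.rel h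

end List

theorem IsLyndon.append_le_append_of_isSuffix {α : Type*} [LinearOrder α] {i q : List α}
    (hL : IsLyndon i) (hq : q ≠ []) (hqi : q <:+ i) (m : List α) : i ++ m ≤ q ++ m := by
  rcases eq_or_ne q i with rfl | hne
  · rfl
  have hlen : q.length < i.length := lt_of_le_of_ne hqi.length_le (mt hqi.eq_of_length hne)
  exact (List.append_lt_append_of_not_prefix (hL.2 q hq hne hqi)
    (fun hp => hp.length_le.not_gt hlen) m m).le

section Shuffle

variable {α : Type*}

theorem IsShuffle.symm {u v w : List α} (h : IsShuffle u v w) : IsShuffle v u w := by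
  induction h with
  | nil => exact .nil
  | left _ ih => exact .right ih
  | right _ ih => exact .left ih

theorem IsShuffle.append_left (p : List α) {u v w : List α} (h : IsShuffle u v w) :
    IsShuffle (p ++ u) v (p ++ w) := by
  induction p with
  | nil => exact h
  | cons a p ih => exact .left ih

theorem isShuffle_nil_left : ∀ v : List α, IsShuffle [] v v
  | [] => .nil
  | _ :: v => .right (isShuffle_nil_left v)

theorem isShuffle_append (u v : List α) : IsShuffle u v (u ++ v) := by
  simpa using (isShuffle_nil_left v).append_left u

variable [LinearOrder α]

/-- Each time `s` takes a letter of `x`, take the next letter of `y` instead, which is not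
smaller, and let the letter of `x` join `p`. -/
theorem IsShuffle.exists_ge_of_move_prefix {p x y s : List α} (h : IsShuffle (p ++ y) x s)
    (hxy : x ≤ y) : ∃ t, IsShuffle y (p ++ x) t ∧ s ≤ t := by
  generalize hA : p ++ y = A at h
  induction h generalizing p y with
  | nil =>
    obtain ⟨rfl, rfl⟩ := List.append_eq_nil_iff.mp hA
    exact ⟨[], .nil, le_rfl⟩
  | @left a μ ν w h ih =>
    cases p with
    | nil =>
      subst hA
      exact ⟨_, h.left, le_rfl⟩
    | cons b p =>
      simp only [List.cons_append, List.cons.injEq] at hA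
      obtain ⟨rfl, hA⟩ := hA
      obtain ⟨t, ht, hwt⟩ := ih hxy hA
      exact ⟨b :: t, ht.right, List.cons_le_cons b hwt⟩
  | @right c μ ν w h ih =>
    cases y with
    | nil => exact absurd (List.eq_nil_of_le_nil hxy) (List.cons_ne_nil _ _)
    | cons d y =>
      rcases List.cons_le_cons_iff'.mp hxy with hlt | ⟨rfl, hle⟩
      · exact ⟨_, (isShuffle_append _ _).left, (List.cons_lt_cons_iff.mpr (.inl hlt)).le⟩
      · obtain ⟨t, ht, hwt⟩ := ih (p := p ++ [c]) hle (by simp [← hA])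
        exact ⟨c :: t, by simpa using ht.left, List.cons_le_cons c hwt⟩

theorem IsShuffle.exists_le_cons_of_le {a : α} {u v s : List α} (hs : IsShuffle (a :: u) v s)
    (hv : v ≤ a :: u) : ∃ s', IsShuffle u v s' ∧ s ≤ a :: s' := by
  cases hs with
  | left h => exact ⟨_, h, le_rfl⟩
  | @right b _ v w h =>
    rcases List.cons_le_cons_iff'.mp hv with hlt | ⟨rfl, hle⟩
    · exact ⟨_, isShuffle_append u (b :: v), (List.cons_lt_cons_iff.mpr (.inl hlt)).le⟩
    · obtain ⟨t, ht, hwt⟩ := IsShuffle.exists_ge_of_move_prefix (p := [b]) h hle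
      exact ⟨t, ht, List.cons_le_cons b hwt⟩

theorem IsShuffle.exists_le_append_of_forall_isSuffix {i m v s : List α}
    (hs : IsShuffle (i ++ m) v s) (hv : ∀ q, q ≠ [] → q <:+ i → v ≤ q ++ m) :
    ∃ t, IsShuffle m v t ∧ s ≤ i ++ t := by
  induction i generalizing s with
  | nil => exact ⟨s, hs, le_rfl⟩
  | cons a i ih =>
    obtain ⟨s', hs', hss'⟩ :=
      hs.exists_le_cons_of_le (hv _ (List.cons_ne_nil a i) (List.suffix_refl _))
    obtain ⟨t, ht, hs't⟩ := ih hs' fun q hq hqi => hv q hq (hqi.trans (List.suffix_cons a i))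
    exact ⟨t, ht, hss'.trans (List.cons_le_cons a hs't)⟩

end Shuffle

theorem IsLyndon.exists_shuffle_eq_append_of_greatest {α : Type*} [LinearOrder α]
    {i m v w : List α} (hL : IsLyndon i) (hv : v ≤ i ++ m) (hw : IsShuffle (i ++ m) v w)
    (hgreatest : ∀ w', IsShuffle (i ++ m) v w' → w' ≤ w) :
    ∃ t, IsShuffle m v t ∧ w = i ++ t := by
  obtain ⟨t, ht, hwt⟩ := hw.exists_le_append_of_forall_isSuffix fun q hq hqi =>
    hv.trans (hL.append_le_append_of_isSuffix hq hqi m)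
  exact ⟨t, ht, hwt.antisymm (hgreatest _ (ht.append_left i))⟩

theorem stmt4_general {α : Type*} [LinearOrder α]
    (i₁ : List α) (itl : List (List α)) (j₁ : List α) (jtl : List (List α))
    (hLI : ∀ u ∈ i₁ :: itl, IsLyndon u)
    (hLJ : ∀ u ∈ j₁ :: jtl, IsLyndon u)
    (w : List α)
    (hshuf : IsShuffle ((i₁ :: itl).flatten) ((j₁ :: jtl).flatten) w)
    (hgreatest : ∀ w', IsShuffle ((i₁ :: itl).flatten) ((j₁ :: jtl).flatten) w' → w' ≤ w) :
    (∃ w', IsShuffle itl.flatten ((j₁ :: jtl).flatten) w' ∧ w = i₁ ++ w') ∨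
    (∃ w'', IsShuffle ((i₁ :: itl).flatten) jtl.flatten w'' ∧ w = j₁ ++ w'') := by
  simp only [List.flatten_cons] at hshuf hgreatest ⊢
  rcases le_total (j₁ ++ jtl.flatten) (i₁ ++ itl.flatten) with h | h
  · exact .inl ((hLI i₁ List.mem_cons_self).exists_shuffle_eq_append_of_greatest h hshuf hgreatest)
  · obtain ⟨t, ht, hw⟩ := (hLJ j₁ List.mem_cons_self).exists_shuffle_eq_append_of_greatest h
      hshuf.symm fun w' hw' => hgreatest w' hw'.symm
    exact .inr ⟨t, ht.symm, hw⟩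

/-- if each of `i₁` and `j₁` contains at most two occurrences of its first
letter, then the lexicographically greatest shuffle `w` of `μ = i₁ ⋯ i_r` and `ν = j₁ ⋯ j_s`
is either of the form `i₁ ++ (shuffle of i₂ ⋯ i_r and ν)` or of the form
`j₁ ++ (shuffle of μ and j₂ ⋯ j_s)`. -/
theorem stmt4 {α : Type*} [LinearOrder α]
    (i₁ : List α) (itl : List (List α)) (j₁ : List α) (jtl : List (List α))
    (hLI : ∀ u ∈ i₁ :: itl, IsLyndon u)
    (hLJ : ∀ u ∈ j₁ :: jtl, IsLyndon u)
    (hdecI : List.Chain' (fun u v : List α => v ≤ u) (i₁ :: itl))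
    (hdecJ : List.Chain' (fun u v : List α => v ≤ u) (j₁ :: jtl))
    (hi : i₁ ≠ []) (hj : j₁ ≠ [])
    (hcounti : List.count (i₁.head hi) i₁ ≤ 2)
    (hcountj : List.count (j₁.head hj) j₁ ≤ 2)
    (w : List α)
    (hshuf : IsShuffle ((i₁ :: itl).flatten) ((j₁ :: jtl).flatten) w)
    (hgreatest : ∀ w', IsShuffle ((i₁ :: itl).flatten) ((j₁ :: jtl).flatten) w' → w' ≤ w) :
    (∃ w', IsShuffle itl.flatten ((j₁ :: jtl).flatten) w' ∧ w = i₁ ++ w') ∨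
    (∃ w'', IsShuffle ((i₁ :: itl).flatten) jtl.flatten w'' ∧ w = j₁ ++ w'') :=
  stmt4_general i₁ itl j₁ jtl hLI hLJ w hshuf hgreatest
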